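/- Let Ω ⊆ ℝⁿ be a domain, 1 < p < q < ∞, and let a, b, c ∈ W^{1,p}(Ω) ∩ L^q(Ω) have pairwise disjoint (separated) supports, with b ≢ 0, c ≢ 0, and suppose ‖b‖_{W^{1,p}}^p / ‖b‖_{L^q}^q ≥ ‖c‖_{W^{1,p}}^p / ‖c‖_{L^q}^q. Define u = a + b + c and U = a + t·c where t = (‖b‖_{L^q}^q + ‖c‖_{L^q}^q)^{1/q} / ‖c‖_{L^q}. Then ∫_Ω |U|^q = ∫_Ω |u|^q and ‖U‖_{W^{1,p}}^p < ‖u‖_{W^{1,p}}^p. -/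

import Mathlib

/-!
Disjointly supported functions add up without interaction, also in the derivative: if `f` and `g`
are differentiable at `x` with disjoint supports, one of `f'(x)`, `g'(x)` vanishes, since along a
direction on which both are nonzero, `f` and `g` would both be nonzero at points close to `x`.
Hence, with `A, B, C` the `L^q` and `A', B', C'` the `W^{1,p}` energies of `a, b, c`, the function
`u` has energies `A + B + C` and `A' + B' + C'`, while `U` has `A + t^q C` and `A' + t^p C'`.
Since `t^q C = B + C`, the first claim holds, and since `t > 1` and `p < q`,
`t^p C' < t^q C' = C' + B C'/C ≤ C' + B'` by the ratio hypothesis.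
-/

open MeasureTheory Set Function Topology

theorem Function.eq_zero_or_eq_zero_of_disjoint_support {α M N : Type*} [Zero M] [Zero N]
    {f : α → M} {g : α → N} (hfg : Disjoint (support f) (support g)) (x : α) :
    f x = 0 ∨ g x = 0 := by
  by_contra! h
  exact disjoint_left.1 hfg h.1 h.2

theorem norm_add_rpow_of_eq_zero_or {F : Type*} [SeminormedAddCommGroup F] {p : ℝ} (hp : p ≠ 0)
    {y z : F} (h : y = 0 ∨ z = 0) : ‖y + z‖ ^ p = ‖y‖ ^ p + ‖z‖ ^ p := by
  rcases h with rfl | rfl <;> simp [Real.zero_rpow hp]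

section Calculus

variable {𝕜 E F G : Type*} [NontriviallyNormedField 𝕜] [NormedAddCommGroup E] [NormedSpace 𝕜 E]
  [NormedAddCommGroup F] [NormedSpace 𝕜 F] [NormedAddCommGroup G] [NormedSpace 𝕜 G]

theorem ContinuousLinearMap.exists_apply_ne_zero_and_apply_ne_zero {φ : E →L[𝕜] F}
    {ψ : E →L[𝕜] G} (hφ : φ ≠ 0) (hψ : ψ ≠ 0) : ∃ v, φ v ≠ 0 ∧ ψ v ≠ 0 := by
  obtain ⟨v, hv⟩ := DFunLike.ne_iff.1 hφ
  obtain ⟨w, hw⟩ := DFunLike.ne_iff.1 hψ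
  by_cases hψv : ψ v = 0
  · by_cases hφw : φ w = 0
    · exact ⟨v + w, by simpa [hφw] using hv, by simpa [hψv] using hw⟩
    · exact ⟨w, hφw, hw⟩
  · exact ⟨v, hv, hψv⟩

theorem DifferentiableAt.eventually_apply_add_smul_ne_zero {f : E → F} {x v : E}
    (hf : DifferentiableAt 𝕜 f x) (hv : fderiv 𝕜 f x v ≠ 0) :
    ∀ᶠ s in 𝓝[≠] (0 : 𝕜), f (x + s • v) ≠ 0 := by
  have hline : HasDerivAt (fun s : 𝕜 => x + s • v) v 0 := by
    simpa using ((hasDerivAt_id (0 : 𝕜)).smul_const v).const_add x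
  exact (hf.hasFDerivAt.comp_hasDerivAt_of_eq 0 hline (by simp)).eventually_ne hv

theorem fderiv_eq_zero_or_of_disjoint_support {f : E → F} {g : E → G} {x : E}
    (hf : DifferentiableAt 𝕜 f x) (hg : DifferentiableAt 𝕜 g x)
    (hfg : Disjoint (support f) (support g)) : fderiv 𝕜 f x = 0 ∨ fderiv 𝕜 g x = 0 := by
  by_contra! h
  obtain ⟨v, hfv, hgv⟩ := ContinuousLinearMap.exists_apply_ne_zero_and_apply_ne_zero h.1 h.2
  obtain ⟨s, hfs, hgs⟩ :=
    ((hf.eventually_apply_add_smul_ne_zero hfv).and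
      (hg.eventually_apply_add_smul_ne_zero hgv)).exists
  exact disjoint_left.1 hfg hfs hgs

end Calculus

theorem abs_add_rpow_of_disjoint_support {α : Type*} {f g : α → ℝ} {q : ℝ} (hq : q ≠ 0)
    (hfg : Disjoint (support f) (support g)) (x : α) :
    |f x + g x| ^ q = |f x| ^ q + |g x| ^ q := by
  simpa only [Real.norm_eq_abs] using
    norm_add_rpow_of_eq_zero_or hq (eq_zero_or_eq_zero_of_disjoint_support hfg x)

theorem abs_const_mul_rpow {t : ℝ} (ht : 0 ≤ t) (y q : ℝ) : |t * y| ^ q = t ^ q * |y| ^ q := by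
  rw [abs_mul, abs_of_nonneg ht, Real.mul_rpow ht (abs_nonneg y)]

section LebesgueIntegrand

variable {α : Type*} [MeasurableSpace α] {μ : Measure α} {Ω : Set α} {q : ℝ} {f g h : α → ℝ}

theorem setIntegral_abs_add_add_rpow (hq : q ≠ 0) (hfg : Disjoint (support f) (support g))
    (hfh : Disjoint (support f) (support h)) (hgh : Disjoint (support g) (support h))
    (hf : IntegrableOn (fun x => |f x| ^ q) Ω μ) (hg : IntegrableOn (fun x => |g x| ^ q) Ω μ)
    (hh : IntegrableOn (fun x => |h x| ^ q) Ω μ) :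
    ∫ x in Ω, |f x + g x + h x| ^ q ∂μ
      = (∫ x in Ω, |f x| ^ q ∂μ) + (∫ x in Ω, |g x| ^ q ∂μ) + ∫ x in Ω, |h x| ^ q ∂μ := by
  have hfgh : Disjoint (support fun x => f x + g x) (support h) :=
    (disjoint_union_left.2 ⟨hfh, hgh⟩).mono_left (support_add f g)
  simp_rw [abs_add_rpow_of_disjoint_support hq hfgh, abs_add_rpow_of_disjoint_support hq hfg]
  rw [integral_add (f := fun x => |f x| ^ q + |g x| ^ q) (hf.add hg) hh, integral_add hf hg]

theorem setIntegral_abs_add_const_mul_rpow (hq : q ≠ 0) {t : ℝ} (ht : 0 ≤ t)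
    (hfh : Disjoint (support f) (support h))
    (hf : IntegrableOn (fun x => |f x| ^ q) Ω μ) (hh : IntegrableOn (fun x => |h x| ^ q) Ω μ) :
    ∫ x in Ω, |f x + t * h x| ^ q ∂μ
      = (∫ x in Ω, |f x| ^ q ∂μ) + t ^ q * ∫ x in Ω, |h x| ^ q ∂μ := by
  have hfth : Disjoint (support f) (support fun x => t * h x) :=
    hfh.mono_right (support_mul_subset_right _ _)
  simp_rw [abs_add_rpow_of_disjoint_support hq hfth, abs_const_mul_rpow ht]
  rw [integral_add hf (hh.const_mul _), integral_const_mul]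

end LebesgueIntegrand

section SobolevIntegrand

variable {E : Type*} [NormedAddCommGroup E] [NormedSpace ℝ E] {p : ℝ} {f g h : E → ℝ} {x : E}

/-- The integrand of `‖f‖_{W^{1,p}}^p`. -/
noncomputable def sobolevIntegrand (p : ℝ) (f : E → ℝ) (x : E) : ℝ :=
  ‖fderiv ℝ f x‖ ^ p + |f x| ^ p

theorem sobolevIntegrand_nonneg (p : ℝ) (f : E → ℝ) (x : E) : 0 ≤ sobolevIntegrand p f x :=
  add_nonneg (Real.rpow_nonneg (norm_nonneg _) p) (Real.rpow_nonneg (abs_nonneg _) p)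

theorem sobolevIntegrand_add_of_disjoint_support (hp : p ≠ 0) (hf : DifferentiableAt ℝ f x)
    (hg : DifferentiableAt ℝ g x) (hfg : Disjoint (support f) (support g)) :
    sobolevIntegrand p (fun y => f y + g y) x
      = sobolevIntegrand p f x + sobolevIntegrand p g x := by
  have hD := norm_add_rpow_of_eq_zero_or hp (fderiv_eq_zero_or_of_disjoint_support hf hg hfg)
  simp only [sobolevIntegrand, fderiv_fun_add hf hg, hD, abs_add_rpow_of_disjoint_support hp hfg]
  ring

theorem sobolevIntegrand_const_mul {t : ℝ} (ht : 0 ≤ t) (hf : DifferentiableAt ℝ f x) :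
    sobolevIntegrand p (fun y => t * f y) x = t ^ p * sobolevIntegrand p f x := by
  simp only [sobolevIntegrand, fderiv_const_mul hf, norm_smul, Real.norm_eq_abs, abs_of_nonneg ht,
    Real.mul_rpow ht (norm_nonneg _), abs_const_mul_rpow ht]
  ring

variable [MeasurableSpace E] {μ : Measure E} {Ω : Set E}

theorem setIntegral_sobolevIntegrand_pos {q : ℝ} (hp : p ≠ 0) (hq : q ≠ 0)
    (hfW : IntegrableOn (sobolevIntegrand p f) Ω μ) (hf : ∫ x in Ω, |f x| ^ q ∂μ ≠ 0) :
    0 < ∫ x in Ω, sobolevIntegrand p f x ∂μ := by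
  refine (integral_nonneg (sobolevIntegrand_nonneg p f)).lt_of_ne fun h0 => hf ?_
  have hW0 : sobolevIntegrand p f =ᵐ[μ.restrict Ω] 0 :=
    (integral_eq_zero_iff_of_nonneg (sobolevIntegrand_nonneg p f) hfW).1 h0.symm
  refine integral_eq_zero_of_ae (hW0.mono fun x hx => ?_)
  have hfx : |f x| ^ p = 0 := ((add_eq_zero_iff_of_nonneg (Real.rpow_nonneg (norm_nonneg _) p)
    (Real.rpow_nonneg (abs_nonneg _) p)).1 hx).2
  simp [abs_eq_zero.1 ((Real.rpow_eq_zero (abs_nonneg _) hp).1 hfx), Real.zero_rpow hq]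

variable [OpensMeasurableSpace E]

theorem setIntegral_sobolevIntegrand_add_add (hΩ : IsOpen Ω) (hp : p ≠ 0)
    (hf : DifferentiableOn ℝ f Ω) (hg : DifferentiableOn ℝ g Ω) (hh : DifferentiableOn ℝ h Ω)
    (hfg : Disjoint (support f) (support g)) (hfh : Disjoint (support f) (support h))
    (hgh : Disjoint (support g) (support h)) (hfW : IntegrableOn (sobolevIntegrand p f) Ω μ)
    (hgW : IntegrableOn (sobolevIntegrand p g) Ω μ)
    (hhW : IntegrableOn (sobolevIntegrand p h) Ω μ) :
    ∫ x in Ω, sobolevIntegrand p (fun y => f y + g y + h y) x ∂μ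
      = (∫ x in Ω, sobolevIntegrand p f x ∂μ) + (∫ x in Ω, sobolevIntegrand p g x ∂μ)
        + ∫ x in Ω, sobolevIntegrand p h x ∂μ := by
  have hfgh : Disjoint (support fun x => f x + g x) (support h) :=
    (disjoint_union_left.2 ⟨hfh, hgh⟩).mono_left (support_add f g)
  have hEq : EqOn (sobolevIntegrand p fun y => f y + g y + h y)
      (fun x => sobolevIntegrand p f x + sobolevIntegrand p g x + sobolevIntegrand p h x) Ω := by
    intro x hx
    have hfx := hf.differentiableAt (hΩ.mem_nhds hx)
    have hgx := hg.differentiableAt (hΩ.mem_nhds hx)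
    rw [sobolevIntegrand_add_of_disjoint_support hp (hfx.fun_add hgx)
        (hh.differentiableAt (hΩ.mem_nhds hx)) hfgh,
      sobolevIntegrand_add_of_disjoint_support hp hfx hgx hfg]
  rw [setIntegral_congr_fun hΩ.measurableSet hEq,
    integral_add (f := fun x => sobolevIntegrand p f x + sobolevIntegrand p g x) (hfW.add hgW) hhW,
    integral_add hfW hgW]

theorem setIntegral_sobolevIntegrand_add_const_mul (hΩ : IsOpen Ω) (hp : p ≠ 0) {t : ℝ}
    (ht : 0 ≤ t) (hf : DifferentiableOn ℝ f Ω) (hh : DifferentiableOn ℝ h Ω)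
    (hfh : Disjoint (support f) (support h)) (hfW : IntegrableOn (sobolevIntegrand p f) Ω μ)
    (hhW : IntegrableOn (sobolevIntegrand p h) Ω μ) :
    ∫ x in Ω, sobolevIntegrand p (fun y => f y + t * h y) x ∂μ
      = (∫ x in Ω, sobolevIntegrand p f x ∂μ) + t ^ p * ∫ x in Ω, sobolevIntegrand p h x ∂μ := by
  have hfth : Disjoint (support f) (support fun x => t * h x) :=
    hfh.mono_right (support_mul_subset_right _ _)
  have hEq : EqOn (sobolevIntegrand p fun y => f y + t * h y)
      (fun x => sobolevIntegrand p f x + t ^ p * sobolevIntegrand p h x) Ω := by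
    intro x hx
    have hhx := hh.differentiableAt (hΩ.mem_nhds hx)
    rw [sobolevIntegrand_add_of_disjoint_support hp (hf.differentiableAt (hΩ.mem_nhds hx))
        (hhx.const_mul t) hfth, sobolevIntegrand_const_mul ht hhx]
  rw [setIntegral_congr_fun hΩ.measurableSet hEq, integral_add hfW (hhW.const_mul _),
    integral_const_mul]

end SobolevIntegrand

theorem Real.rpow_one_div_div_rpow_one_div_rpow {x y q : ℝ} (hx : 0 ≤ x) (hy : 0 ≤ y)
    (hq : q ≠ 0) : (x ^ (1 / q) / y ^ (1 / q)) ^ q = x / y := by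
  rw [← Real.div_rpow hx hy, one_div, Real.rpow_inv_rpow (div_nonneg hx hy) hq]

theorem rpow_mul_lt_add_of_div_le_div {p q B C B' C' : ℝ} (hpq : p < q) (hq : 0 < q)
    (hB : 0 < B) (hC : 0 < C) (hC' : 0 < C') (hratio : C' / C ≤ B' / B) :
    ((B + C) ^ (1 / q) / C ^ (1 / q)) ^ p * C' < B' + C' := by
  have hs : 1 < (B + C) / C := by rw [one_lt_div hC]; linarith
  rw [← Real.div_rpow (by positivity) hC.le, one_div]
  calc (((B + C) / C) ^ q⁻¹) ^ p * C' < (((B + C) / C) ^ q⁻¹) ^ q * C' := by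
        gcongr
        exact Real.rpow_lt_rpow_of_exponent_lt (Real.one_lt_rpow hs (inv_pos.2 hq)) hpq
    _ = B * (C' / C) + C' := by
        rw [Real.rpow_inv_rpow (by positivity) hq.ne']
        field_simp
    _ ≤ B * (B' / B) + C' := by gcongr
    _ = B' + C' := by rw [mul_div_cancel₀ _ hB.ne']

theorem hump_destruction_general
    (n : ℕ) (Ω : Set (Fin n → ℝ)) (hΩ_open : IsOpen Ω)
    (p q : ℝ) (hp : 1 < p) (hpq : p < q)
    (a b c : (Fin n → ℝ) → ℝ)
    (ha_diff : DifferentiableOn ℝ a Ω) (hb_diff : DifferentiableOn ℝ b Ω)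
    (hc_diff : DifferentiableOn ℝ c Ω)
    (ha_W : IntegrableOn (fun x => ‖fderiv ℝ a x‖ ^ p + |a x| ^ p) Ω)
    (hb_W : IntegrableOn (fun x => ‖fderiv ℝ b x‖ ^ p + |b x| ^ p) Ω)
    (hc_W : IntegrableOn (fun x => ‖fderiv ℝ c x‖ ^ p + |c x| ^ p) Ω)
    (ha_Lq : IntegrableOn (fun x => |a x| ^ q) Ω)
    (hb_Lq : IntegrableOn (fun x => |b x| ^ q) Ω)
    (hc_Lq : IntegrableOn (fun x => |c x| ^ q) Ω)
    (hab : Disjoint (support a) (support b))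
    (hac : Disjoint (support a) (support c))
    (hbc : Disjoint (support b) (support c))
    (hb_ne : ∫ x in Ω, |b x| ^ q ≠ 0) (hc_ne : ∫ x in Ω, |c x| ^ q ≠ 0)
    (hratio : (∫ x in Ω, (‖fderiv ℝ b x‖ ^ p + |b x| ^ p)) / (∫ x in Ω, |b x| ^ q)
        ≥ (∫ x in Ω, (‖fderiv ℝ c x‖ ^ p + |c x| ^ p)) / (∫ x in Ω, |c x| ^ q)) :
    letI t : ℝ := ((∫ x in Ω, |b x| ^ q) + (∫ x in Ω, |c x| ^ q)) ^ (1 / q)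
        / (∫ x in Ω, |c x| ^ q) ^ (1 / q)
    letI u : (Fin n → ℝ) → ℝ := fun x => a x + b x + c x
    letI U : (Fin n → ℝ) → ℝ := fun x => a x + t * c x
    (∫ x in Ω, |U x| ^ q) = (∫ x in Ω, |u x| ^ q) ∧
    (∫ x in Ω, (‖fderiv ℝ U x‖ ^ p + |U x| ^ p))
      < (∫ x in Ω, (‖fderiv ℝ u x‖ ^ p + |u x| ^ p)) := by
  set B := ∫ x in Ω, |b x| ^ q
  set C := ∫ x in Ω, |c x| ^ q
  set t := (B + C) ^ (1 / q) / C ^ (1 / q) with ht_def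
  show ∫ x in Ω, |a x + t * c x| ^ q = ∫ x in Ω, |a x + b x + c x| ^ q ∧
    ∫ x in Ω, sobolevIntegrand p (fun y => a y + t * c y) x
      < ∫ x in Ω, sobolevIntegrand p (fun y => a y + b y + c y) x
  have hq : 0 < q := by linarith
  have hp0 : p ≠ 0 := by positivity
  have hB : 0 < B := (integral_nonneg fun x => Real.rpow_nonneg (abs_nonneg _) q).lt_of_ne' hb_ne
  have hC : 0 < C := (integral_nonneg fun x => Real.rpow_nonneg (abs_nonneg _) q).lt_of_ne' hc_ne
  have ht : 0 ≤ t := by positivity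
  rw [setIntegral_abs_add_const_mul_rpow hq.ne' ht hac ha_Lq hc_Lq,
    setIntegral_abs_add_add_rpow hq.ne' hab hac hbc ha_Lq hb_Lq hc_Lq,
    setIntegral_sobolevIntegrand_add_const_mul hΩ_open hp0 ht ha_diff hc_diff hac ha_W hc_W,
    setIntegral_sobolevIntegrand_add_add hΩ_open hp0 ha_diff hb_diff hc_diff hab hac hbc ha_W hb_W
      hc_W]
  constructor
  · rw [ht_def, Real.rpow_one_div_div_rpow_one_div_rpow (add_pos hB hC).le hC.le hq.ne',
      div_mul_cancel₀ _ hC.ne', add_assoc]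
  · rw [add_assoc, add_lt_add_iff_left]
    exact rpow_mul_lt_add_of_div_le_div hpq hq hB hC
      (setIntegral_sobolevIntegrand_pos hp0 hq.ne' hc_W hc_ne) hratio

/-- The hump destruction lemma: let `Ω ⊆ ℝⁿ` be a domain, `1 < p < q < ∞`, and let
`a, b, c ∈ W^{1,p}(Ω) ∩ L^q(Ω)` have pairwise disjoint supports, with `b ≢ 0`, `c ≢ 0`
and `‖b‖_{W^{1,p}}^p / ‖b‖_{L^q}^q ≥ ‖c‖_{W^{1,p}}^p / ‖c‖_{L^q}^q`. Set `u = a + b + c`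
and `U = a + t c`, `t = (‖b‖_{L^q}^q + ‖c‖_{L^q}^q)^{1/q} / ‖c‖_{L^q}`. Then
`∫_Ω |U|^q = ∫_Ω |u|^q` and `‖U‖_{W^{1,p}}^p < ‖u‖_{W^{1,p}}^p`. -/
theorem hump_destruction
    (n : ℕ) (Ω : Set (Fin n → ℝ)) (hΩ_open : IsOpen Ω) (hΩ_conn : IsConnected Ω)
    (p q : ℝ) (hp : 1 < p) (hpq : p < q)
    (a b c : (Fin n → ℝ) → ℝ)
    (ha_diff : DifferentiableOn ℝ a Ω) (hb_diff : DifferentiableOn ℝ b Ω)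
    (hc_diff : DifferentiableOn ℝ c Ω)
    (ha_W : IntegrableOn (fun x => ‖fderiv ℝ a x‖ ^ p + |a x| ^ p) Ω)
    (hb_W : IntegrableOn (fun x => ‖fderiv ℝ b x‖ ^ p + |b x| ^ p) Ω)
    (hc_W : IntegrableOn (fun x => ‖fderiv ℝ c x‖ ^ p + |c x| ^ p) Ω)
    (ha_Lq : IntegrableOn (fun x => |a x| ^ q) Ω)
    (hb_Lq : IntegrableOn (fun x => |b x| ^ q) Ω)
    (hc_Lq : IntegrableOn (fun x => |c x| ^ q) Ω)
    (hab : Disjoint (support a) (support b))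
    (hac : Disjoint (support a) (support c))
    (hbc : Disjoint (support b) (support c))
    (hb_ne : ∫ x in Ω, |b x| ^ q ≠ 0) (hc_ne : ∫ x in Ω, |c x| ^ q ≠ 0)
    (hratio : (∫ x in Ω, (‖fderiv ℝ b x‖ ^ p + |b x| ^ p)) / (∫ x in Ω, |b x| ^ q)
        ≥ (∫ x in Ω, (‖fderiv ℝ c x‖ ^ p + |c x| ^ p)) / (∫ x in Ω, |c x| ^ q)) :
    letI t : ℝ := ((∫ x in Ω, |b x| ^ q) + (∫ x in Ω, |c x| ^ q)) ^ (1 / q)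
        / (∫ x in Ω, |c x| ^ q) ^ (1 / q)
    letI u : (Fin n → ℝ) → ℝ := fun x => a x + b x + c x
    letI U : (Fin n → ℝ) → ℝ := fun x => a x + t * c x
    (∫ x in Ω, |U x| ^ q) = (∫ x in Ω, |u x| ^ q) ∧
    (∫ x in Ω, (‖fderiv ℝ U x‖ ^ p + |U x| ^ p))
      < (∫ x in Ω, (‖fderiv ℝ u x‖ ^ p + |u x| ^ p)) :=
  hump_destruction_general n Ω hΩ_open p q hp hpq a b c ha_diff hb_diff hc_diff ha_W hb_W hc_W ha_Lq
    hb_Lq hc_Lq hab hac hbc hb_ne hc_ne hratio
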